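/- Let K ≥ 2 be an even integer, U ∈ ℂ^{B^K}, V ∈ ℝ^{B^K}, and let t ≥ 0 satisfy t·δx·max_{k∈B^K}|(V_{k+1} − V_k)/δx| ≤ π. Then ‖(e^{itV_k}U_k)_{k∈B^K}‖_{h¹} ≥ (2/π)·t·‖(((V_{k+1} − V_k)/δx)·U_k)_{k∈B^K}‖_{ℓ²} − ‖U‖_{h¹}. -/

import Mathlib

/-- The index set `B^K = {−K/2, …, K/2−1}` (for `K` even). -/
noncomputable def BK (K : ℕ) : Finset ℤ := Finset.Icc (-((K : ℤ) / 2)) ((K : ℤ) / 2 - 1)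

/-- The discrete Fourier transform `(F_K U)_j = (1/K) Σ_{k∈B^K} e^{−2πijk/K} U_k`. -/
noncomputable def dft (K : ℕ) (U : ℤ → ℂ) (j : ℤ) : ℂ :=
  (1 / (K : ℂ)) * ∑ k ∈ BK K,
    Complex.exp (-(2 * (Real.pi : ℂ) * Complex.I * (j : ℂ) * (k : ℂ)) / (K : ℂ)) * U k

/-- The inverse discrete Fourier transform `(F_K⁻¹ W)_k = Σ_{j∈B^K} e^{2πijk/K} W_j`. -/
noncomputable def idft (K : ℕ) (W : ℤ → ℂ) (k : ℤ) : ℂ :=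
  ∑ j ∈ BK K,
    Complex.exp ((2 * (Real.pi : ℂ) * Complex.I * (j : ℂ) * (k : ℂ)) / (K : ℂ)) * W j

/-- The discrete `ℓ²` norm: `‖U‖_{ℓ²}² = (2π/K) Σ_{k∈B^K} |U_k|²`. -/
noncomputable def l2normK (K : ℕ) (U : ℤ → ℂ) : ℝ :=
  Real.sqrt ((2 * Real.pi / K) * ∑ k ∈ BK K, ‖U k‖ ^ 2)

/-- The discrete `h¹` norm: `‖U‖_{h¹}² = (2π/K) Σ_{k∈B^K} |(U_{k+1}−U_k)/δx|²`
with `δx = 2π/K`. -/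
noncomputable def h1normK (K : ℕ) (U : ℤ → ℂ) : ℝ :=
  Real.sqrt ((2 * Real.pi / K) *
    ∑ k ∈ BK K, ‖(U (k + 1) - U k) / ((2 * Real.pi / K : ℝ) : ℂ)‖ ^ 2)

/-- The discrete kinetic energy `T^K(W) = (1/K) Σ_{j∈B^K} j²|W_j|²`. -/
noncomputable def tK (K : ℕ) (W : ℤ → ℂ) : ℝ :=
  (1 / (K : ℝ)) * ∑ j ∈ BK K, (j : ℝ) ^ 2 * ‖W j‖ ^ 2

/-- The discrete free Schrödinger flow `e^{itΔ^K}U = F_K⁻¹(j ↦ e^{−itj²}(F_K U)_j)`. -/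
noncomputable def freeFlowK (K : ℕ) (t : ℝ) (U : ℤ → ℂ) : ℤ → ℂ :=
  idft K (fun j => Complex.exp (-(Complex.I * (t : ℂ)) * (j : ℂ) ^ 2) * dft K U j)

/-! Write `φ = t V_k`, `ψ = t V_{k+1}`. Then
`e^{iψ} U_{k+1} - e^{iφ} U_k = e^{iψ} (U_{k+1} - U_k) + (e^{i(ψ-φ)} - 1) e^{iφ} U_k`,
and the hypothesis on `t` gives `|ψ - φ| ≤ π`, where Jordan's inequality yields
`|e^{i(ψ-φ)} - 1| = 2 |sin((ψ-φ)/2)| ≥ (2/π) |ψ - φ|`. This bounds each difference quotient of `U`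
weighted by `(2/π) t |(V_{k+1} - V_k)/δx|` by those of the modulated sequence and of `U`;
Minkowski's inequality in the weighted `ℓ²` norm finishes. -/

theorem Real.sqrt_sum_add_sq_le {ι : Type*} (s : Finset ι) (f g : ι → ℝ) :
    √(∑ i ∈ s, (f i + g i) ^ 2) ≤ √(∑ i ∈ s, f i ^ 2) + √(∑ i ∈ s, g i ^ 2) := by
  have h := Real.Lp_add_le (p := 2) s f g one_le_two
  simp only [Real.rpow_two, sq_abs] at h
  simpa only [Real.sqrt_eq_rpow] using h

theorem Real.sqrt_sum_sq_le_of_le_add {ι : Type*} (s : Finset ι) {a b c : ι → ℝ}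
    (ha : ∀ i ∈ s, 0 ≤ a i) (h : ∀ i ∈ s, a i ≤ b i + c i) :
    √(∑ i ∈ s, a i ^ 2) ≤ √(∑ i ∈ s, b i ^ 2) + √(∑ i ∈ s, c i ^ 2) :=
  (Real.sqrt_le_sqrt <| Finset.sum_le_sum fun i hi => pow_le_pow_left₀ (ha i hi) (h i hi) 2).trans
    (Real.sqrt_sum_add_sq_le s b c)

theorem Real.sqrt_mul_sum_sq_le_of_le_add {ι : Type*} (s : Finset ι) {d : ℝ} (hd : 0 ≤ d)
    {a b c : ι → ℝ} (ha : ∀ i ∈ s, 0 ≤ a i) (h : ∀ i ∈ s, a i ≤ b i + c i) :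
    √(d * ∑ i ∈ s, a i ^ 2) ≤ √(d * ∑ i ∈ s, b i ^ 2) + √(d * ∑ i ∈ s, c i ^ 2) := by
  simp only [Real.sqrt_mul hd, ← mul_add]
  exact mul_le_mul_of_nonneg_left (Real.sqrt_sum_sq_le_of_le_add s ha h) (Real.sqrt_nonneg d)

theorem Real.mul_sqrt_mul_sum_sq {ι : Type*} (s : Finset ι) (f : ι → ℝ) (d : ℝ) {c : ℝ}
    (hc : 0 ≤ c) : c * √(d * ∑ i ∈ s, f i ^ 2) = √(d * ∑ i ∈ s, (c * f i) ^ 2) := by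
  simp_rw [mul_pow, ← Finset.mul_sum, mul_left_comm d]
  rw [Real.sqrt_mul (sq_nonneg c), Real.sqrt_sq hc]

theorem Complex.mul_abs_le_norm_exp_I_mul_ofReal_sub_one {θ : ℝ} (hθ : |θ| ≤ Real.pi) :
    2 / Real.pi * |θ| ≤ ‖Complex.exp (Complex.I * θ) - 1‖ := by
  rw [Complex.norm_exp_I_mul_ofReal_sub_one, norm_mul, Real.norm_two, Real.norm_eq_abs]
  have hsin := Real.mul_abs_le_abs_sin (x := θ / 2) (by rw [abs_div, abs_two]; linarith)
  rw [abs_div, abs_two] at hsin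
  linarith

theorem Complex.mul_abs_sub_mul_norm_le_norm_exp_mul_sub_add {φ ψ : ℝ} (h : |ψ - φ| ≤ Real.pi)
    (u u' : ℂ) :
    2 / Real.pi * |ψ - φ| * ‖u‖ ≤
      ‖Complex.exp (Complex.I * ψ) * u' - Complex.exp (Complex.I * φ) * u‖ + ‖u' - u‖ := by
  have hψ : ‖Complex.exp (Complex.I * ψ)‖ = 1 := Complex.norm_exp_I_mul_ofReal ψ
  have hφ : ‖Complex.exp (Complex.I * φ)‖ = 1 := Complex.norm_exp_I_mul_ofReal φ
  have hphase : Complex.exp (Complex.I * ψ) =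
      Complex.exp (Complex.I * ↑(ψ - φ)) * Complex.exp (Complex.I * φ) := by
    rw [← Complex.exp_add]; push_cast; ring_nf
  calc 2 / Real.pi * |ψ - φ| * ‖u‖
      ≤ ‖Complex.exp (Complex.I * ↑(ψ - φ)) - 1‖ * ‖u‖ := by
        gcongr; exact Complex.mul_abs_le_norm_exp_I_mul_ofReal_sub_one h
    _ = ‖(Complex.exp (Complex.I * ψ) * u' - Complex.exp (Complex.I * φ) * u) -
          Complex.exp (Complex.I * ψ) * (u' - u)‖ := by
        rw [← mul_one ‖u‖, ← hφ, ← mul_assoc, ← norm_mul, ← norm_mul, hphase]; ring_nf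
    _ ≤ _ := (norm_sub_le _ _).trans_eq (by rw [norm_mul, hψ, one_mul])

theorem mul_norm_le_norm_modulated_diff_div_add_norm_diff_div {δ t v v' : ℝ} (hδ : 0 < δ)
    (ht0 : 0 ≤ t) (ht : t * δ * |(v' - v) / δ| ≤ Real.pi) (u u' : ℂ) :
    2 / Real.pi * t * ‖(((v' - v) / δ : ℝ) : ℂ) * u‖ ≤
      ‖(Complex.exp (Complex.I * t * v') * u' - Complex.exp (Complex.I * t * v) * u) / (δ : ℂ)‖ +
        ‖(u' - u) / (δ : ℂ)‖ := by
  have hphase : ∀ w : ℝ, Complex.exp (Complex.I * t * w) = Complex.exp (Complex.I * ↑(t * w)) :=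
    fun w => by push_cast; ring_nf
  have hjump : |t * v' - t * v| ≤ Real.pi := by
    calc |t * v' - t * v| = t * δ * |(v' - v) / δ| := by
          rw [← mul_sub, abs_mul, abs_of_nonneg ht0, abs_div, abs_of_pos hδ]; field_simp
      _ ≤ Real.pi := ht
  have key := Complex.mul_abs_sub_mul_norm_le_norm_exp_mul_sub_add hjump u u'
  rw [← mul_sub, abs_mul, abs_of_nonneg ht0] at key
  simp only [hphase, norm_mul, norm_div, Complex.norm_real, Real.norm_eq_abs,
    abs_of_pos hδ, ← add_div]
  calc 2 / Real.pi * t * (|v' - v| / δ * ‖u‖) = 2 / Real.pi * (t * |v' - v|) * ‖u‖ / δ := by ring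
    _ ≤ _ := by gcongr

theorem stmt13_general (K : ℕ) (hK : 2 ≤ K)
    (U : ℤ → ℂ)
    (V : ℤ → ℝ)
    (t : ℝ) (ht0 : 0 ≤ t)
    (ht : ∀ k ∈ BK K,
      t * (2 * Real.pi / K) * |(V (k + 1) - V k) / (2 * Real.pi / K)| ≤ Real.pi) :
    h1normK K (fun k => Complex.exp (Complex.I * (t : ℂ) * ((V k : ℝ) : ℂ)) * U k) ≥
      (2 / Real.pi) * t *
        l2normK K (fun k => (((V (k + 1) - V k) / (2 * Real.pi / K) : ℝ) : ℂ) * U k) -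
      h1normK K U := by
  have hδ : 0 < 2 * Real.pi / K := by
    have : (0 : ℝ) < K := by exact_mod_cast (by omega : 0 < K)
    positivity
  rw [ge_iff_le, sub_le_iff_le_add, h1normK, h1normK, l2normK,
    Real.mul_sqrt_mul_sum_sq _ _ _ (by positivity)]
  refine Real.sqrt_mul_sum_sq_le_of_le_add _ hδ.le (fun k _ => by positivity) fun k hk => ?_
  exact mul_norm_le_norm_modulated_diff_div_add_norm_diff_div hδ ht0 (ht k hk) _ _

/-- Let `U ∈ ℂ^{B^K}`, `V ∈ ℝ^{B^K}` (periodically indexed), and let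
`t ≥ 0` satisfy `t·δx·max_k |(V_{k+1}−V_k)/δx| ≤ π` (stated for every `k ∈ B^K`). Then
`‖(e^{itV_k}U_k)_k‖_{h¹} ≥ (2/π)·t·‖(((V_{k+1}−V_k)/δx)·U_k)_k‖_{ℓ²} − ‖U‖_{h¹}`. -/
theorem stmt13 (K : ℕ) (hK : 2 ≤ K) (hKe : Even K)
    (U : ℤ → ℂ) (hU : ∀ j : ℤ, U (j + K) = U j)
    (V : ℤ → ℝ) (hV : ∀ j : ℤ, V (j + K) = V j)
    (t : ℝ) (ht0 : 0 ≤ t)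
    (ht : ∀ k ∈ BK K,
      t * (2 * Real.pi / K) * |(V (k + 1) - V k) / (2 * Real.pi / K)| ≤ Real.pi) :
    h1normK K (fun k => Complex.exp (Complex.I * (t : ℂ) * ((V k : ℝ) : ℂ)) * U k) ≥
      (2 / Real.pi) * t *
        l2normK K (fun k => (((V (k + 1) - V k) / (2 * Real.pi / K) : ℝ) : ℂ) * U k) -
      h1normK K U :=
  stmt13_general K hK U V t ht0 ht
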